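/- Let n' ≥ 6 and let π be a bijection between two sets V₁, V₂ of labeled vertices with |V₁| = |V₂| = n'. Suppose π has exactly b non-fixed points (vertices v with label(π(v)) ≠ label(v)). Then the number of non-fixed pairs of the induced bijection σ_π on unordered pairs (pairs {u,v} with {label(π(u)), label(π(v))} ≠ {label(u), label(v)}) is at least b(n' - 1 - b/2), which in turn is at least n'·b/3. -/

import Mathlib

/-!
A pair `{u, v}` with `u ≠ v` is fixed by `σ_π` exactly when `u` and `v` are both fixed points or
`π` exchanges their labels. Such exchanged pairs consist of non-fixed points and are pairwise
disjoint, since the label of `π u` determines the partner of `u`; so there are at most `b / 2` of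
them. Hence at most `C(n' - b, 2) + b / 2` of the `C(n', 2)` pairs are fixed, and
`C(n', 2) - C(n' - b, 2) - b / 2 = b (n' - 1 - b / 2)`.
-/

open Finset

section
variable {W V : Type*} {f g : W → V}

theorem eq_swap_of_map_pair_eq {x y : W} (hmap : s(x, y).map f = s(x, y).map g)
    (hx : f x ≠ g x) : f x = g y ∧ f y = g x := by
  rw [Sym2.map_mk, Sym2.map_mk, Sym2.eq_iff] at hmap
  exact hmap.resolve_left fun h => hx h.1

theorem eq_of_map_pair_eq_of_eq (hg : Function.Injective g) {x y : W}
    (hmap : s(x, y).map f = s(x, y).map g) (hx : f x = g x) : f y = g y := by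
  by_contra hy
  obtain ⟨-, hxy⟩ := eq_swap_of_map_pair_eq (Sym2.eq_swap ▸ hmap) hy
  exact hy (hg (hx.symm.trans hxy) ▸ hx)

variable [Fintype W] [DecidableEq W] [DecidableEq V] (f g)

def fixedPairs : Finset (Sym2 W) := {p | ¬p.IsDiag ∧ p.map f = p.map g}

def nonfixedPairs : Finset (Sym2 W) := {p | ¬p.IsDiag ∧ p.map f ≠ p.map g}

def swapPairs : Finset (Sym2 W) := {p ∈ fixedPairs f g | ∀ x ∈ p, f x ≠ g x}

theorem card_nonfixedPairs_add_card_fixedPairs :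
    #(nonfixedPairs f g) + #(fixedPairs f g) = (Fintype.card W).choose 2 := by
  rw [← Sym2.card_subtype_not_diag, Fintype.card_subtype,
    ← card_filter_add_card_filter_not (s := ({p | ¬p.IsDiag} : Finset (Sym2 W)))
      (fun p => p.map f ≠ p.map g)]
  simp only [nonfixedPairs, fixedPairs, filter_filter, not_not]

theorem fixedPairs_subset (hg : Function.Injective g) :
    fixedPairs f g ⊆
      ({v | f v = g v} : Finset W).offDiag.image Sym2.mk.uncurry ∪ swapPairs f g := by
  intro p hp
  induction p using Sym2.ind with
  | _ x y =>
  have hp' := hp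
  simp only [fixedPairs, mem_filter, mem_univ, true_and, Sym2.mk_isDiag_iff] at hp'
  obtain ⟨hxy, hmap⟩ := hp'
  rw [mem_union]
  by_cases hx : f x = g x
  · have hy := eq_of_map_pair_eq_of_eq hg hmap hx
    exact Or.inl (mem_image.2 ⟨(x, y), by simp [hx, hy, hxy], rfl⟩)
  by_cases hy : f y = g y
  · have hx' := eq_of_map_pair_eq_of_eq hg (Sym2.eq_swap ▸ hmap) hy
    exact Or.inl (mem_image.2 ⟨(x, y), by simp [hy, hx', hxy], rfl⟩)
  · exact Or.inr (by simp [swapPairs, hp, hx, hy])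

theorem two_mul_card_swapPairs_le (hg : Function.Injective g) :
    2 * #(swapPairs f g) ≤ #({v | f v ≠ g v} : Finset W) := by
  suffices #(swapPairs f g) * 2 ≤ #({v | f v ≠ g v} : Finset W) * 1 by omega
  refine card_mul_le_card_mul (fun (p : Sym2 W) x => x ∈ p) ?_ ?_
  · intro p hp
    induction p using Sym2.ind with
    | _ x y =>
    simp only [swapPairs, fixedPairs, mem_filter, mem_univ, true_and,
      Sym2.mk_isDiag_iff] at hp
    obtain ⟨⟨hxy, -⟩, hne⟩ := hp
    have hsub : ({x, y} : Finset W) ⊆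
        bipartiteAbove (fun p x => x ∈ p) {v | f v ≠ g v} s(x, y) := by
      intro z hz
      simp only [mem_insert, mem_singleton] at hz
      rcases hz with rfl | rfl <;> simp [bipartiteAbove, hne]
    simpa [card_pair hxy] using card_le_card hsub
  · intro x hx
    rw [card_le_one]
    intro p hp q hq
    simp only [bipartiteBelow, swapPairs, fixedPairs, mem_filter, mem_univ, true_and] at hp hq hx
    obtain ⟨y, rfl⟩ := Sym2.mem_iff_exists.1 hp.2
    obtain ⟨z, rfl⟩ := Sym2.mem_iff_exists.1 hq.2
    have hy := (eq_swap_of_map_pair_eq hp.1.1.2 hx).1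
    have hz := (eq_swap_of_map_pair_eq hq.1.1.2 hx).1
    rw [hg (hy.symm.trans hz)]

theorem mul_sub_le_card_nonfixedPairs (hg : Function.Injective g) {b : ℕ}
    (hb : #({v | f v ≠ g v} : Finset W) = b) :
    (b : ℚ) * (Fintype.card W - 1 - b / 2) ≤ #(nonfixedPairs f g) := by
  have hsplit := card_nonfixedPairs_add_card_fixedPairs f g
  have hfixed := (card_le_card (fixedPairs_subset f g hg)).trans (card_union_le _ _)
  have hswap := hb ▸ two_mul_card_swapPairs_le f g hg
  rw [Sym2.card_image_offDiag] at hfixed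
  have hcard : #({v | f v = g v} : Finset W) + b = Fintype.card W := by
    rw [← hb]; exact card_filter_add_card_filter_not _
  rw [← hcard] at hsplit ⊢
  have hsplit' := congrArg (Nat.cast : ℕ → ℚ) hsplit
  have hfixed' : (_ : ℚ) ≤ _ := Nat.cast_le.2 hfixed
  have hswap' : (_ : ℚ) ≤ _ := Nat.cast_le.2 hswap
  push_cast [Nat.cast_choose_two] at hsplit' hfixed' hswap' ⊢
  linarith

end

theorem mul_div_three_le_mul_sub {n b : ℕ} (hn : 6 ≤ n) (hb : b ≤ n) :
    (n : ℚ) * b / 3 ≤ b * (n - 1 - b / 2) := by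
  have hn' : (6 : ℚ) ≤ n := by exact_mod_cast hn
  have hb' : (b : ℚ) ≤ n := by exact_mod_cast hb
  nlinarith [mul_nonneg b.cast_nonneg (sub_nonneg.2 hn'), mul_nonneg b.cast_nonneg (sub_nonneg.2 hb')]

theorem nonfixed_pairs_lower_bound_general {V : Type*} [DecidableEq V]
    (V₁ V₂ : Finset V) (n' : ℕ) (hn' : 6 ≤ n')
    (hV₁ : V₁.card = n')
    (π : {x // x ∈ V₁} ≃ {x // x ∈ V₂}) (b : ℕ)
    (hb : b = Fintype.card {v : {x // x ∈ V₁} // (π v : V) ≠ (v : V)})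
    (m_b : ℕ)
    (hm : m_b = Fintype.card {p : Sym2 {x // x ∈ V₁} //
        ¬ p.IsDiag ∧ p.map (fun v => (π v : V)) ≠ p.map (fun (v : {x // x ∈ V₁}) => (v : V))}) :
    (b : ℚ) * (n' - 1 - b / 2) ≤ m_b ∧ (n' : ℚ) * b / 3 ≤ b * (n' - 1 - b / 2) := by
  rw [Fintype.card_subtype] at hb hm
  have hcard : Fintype.card V₁ = n' := by rw [Fintype.card_coe, hV₁]
  have hbn : b ≤ n' := hb ▸ hcard ▸ card_filter_le _ _
  refine ⟨?_, mul_div_three_le_mul_sub hn' hbn⟩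
  rw [hm, ← hcard]
  exact mul_sub_le_card_nonfixedPairs _ _ Subtype.val_injective hb.symm

/-- Lemma 2.1 (non-fixed pairs): if a bijection `π` between two `n'`-element vertex sets
`V₁, V₂ ⊆ V` (with `n' ≥ 6`) has exactly `b` non-fixed points (`π v ≠ v`), then the number of
non-fixed unordered pairs of the induced bijection `σ_π` is at least `b(n' - 1 - b/2) ≥ n'·b/3`. -/
theorem nonfixed_pairs_lower_bound {V : Type*} [DecidableEq V]
    (V₁ V₂ : Finset V) (n' : ℕ) (hn' : 6 ≤ n')
    (hV₁ : V₁.card = n') (hV₂ : V₂.card = n')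
    (π : {x // x ∈ V₁} ≃ {x // x ∈ V₂}) (b : ℕ)
    (hb : b = Fintype.card {v : {x // x ∈ V₁} // (π v : V) ≠ (v : V)})
    (m_b : ℕ)
    (hm : m_b = Fintype.card {p : Sym2 {x // x ∈ V₁} //
        ¬ p.IsDiag ∧ p.map (fun v => (π v : V)) ≠ p.map (fun (v : {x // x ∈ V₁}) => (v : V))}) :
    (b : ℚ) * (n' - 1 - b / 2) ≤ m_b ∧ (n' : ℚ) * b / 3 ≤ b * (n' - 1 - b / 2) :=
  nonfixed_pairs_lower_bound_general V₁ V₂ n' hn' hV₁ π b hb m_b hm
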